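/- Let A ⊆ ℕ be r.e. and suppose every total function g ≤_T A admits an ω-r.e. approximation with at most x mind-changes: there is a total recursive ḡ(x,s) with lim_s ḡ(x,s) = g(x) and |{s : ḡ(x,s) ≠ ḡ(x,s+1)}| ≤ x for all x. Then for every unbounded, nondecreasing, total recursive function f there is a constant c such that C(χ_A ↾ n) ≤ log n + f(n) + c for all n. -/

import Mathlib

/-- Binary strings. -/
abbrev Str : Type := List Bool

/-- An interpreter: takes a program and an input string, and possibly returns an
output in `{0,1}* ∪ {⊥}` (`none` is the "don't know" answer `⊥`). -/
abbrev Interp : Type := Str → Str →. Option Str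

/-- `λ z. U p z` is a total function. -/
def TotalProg (U : Interp) (p : Str) : Prop := ∀ z : Str, (U p z).Dom

/-- The output `o` correctly computes `χ_A z` (coding the bit `b` as the string `[b]`). -/
def Agrees (A : Set Str) (z : Str) (o : Option Str) : Prop :=
  (z ∈ A ∧ o = some [true]) ∨ (z ∉ A ∧ o = some [false])

/-- `λ z. U p z` is an `A`-consistent function: every output is `⊥` or `χ_A` of the input. -/
def Consistent (U : Interp) (A : Set Str) (p : Str) : Prop :=
  ∀ z o, o ∈ U p z → o = none ∨ Agrees A z o

/-- Kolmogorov complexity of `x` w.r.t. the interpreter `U` (`⊤` if undefined). -/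
noncomputable def KC (U : Interp) (x : Str) : ℕ∞ :=
  sInf ((fun p : Str => (p.length : ℕ∞)) '' {p | some x ∈ U p []})

/-- Instance complexity of `x` w.r.t. `A` in `U`. -/
noncomputable def ic (U : Interp) (A : Set Str) (x : Str) : ℕ∞ :=
  sInf ((fun p : Str => (p.length : ℕ∞)) ''
    {p | TotalProg U p ∧ Consistent U A p ∧ ∃ o, o ∈ U p x ∧ Agrees A x o})

/-- Weak instance complexity of `x` w.r.t. `A` in `U` (totality is dropped). -/
noncomputable def icw (U : Interp) (A : Set Str) (x : Str) : ℕ∞ :=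
  sInf ((fun p : Str => (p.length : ℕ∞)) ''
    {p | Consistent U A p ∧ ∃ o, o ∈ U p x ∧ Agrees A x o})

/-- `U` is an optimal partial recursive interpreter: it is partial recursive and
simulates every partial recursive interpreter with constant overhead, for `C`,
`ic` and the weak instance complexity. -/
def Optimal (U : Interp) : Prop :=
  Partrec₂ U ∧
    ∀ U' : Interp, Partrec₂ U' → ∃ c : ℕ,
      (∀ x, KC U x ≤ KC U' x + c) ∧
      (∀ A x, ic U A x ≤ ic U' A x + c) ∧
      (∀ A x, icw U A x ≤ icw U' A x + c)

/-- A set is recursively enumerable. -/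
def REset {α : Type} [Primcodable α] (A : Set α) : Prop := REPred (· ∈ A)

/-- A set is recursive (decidable). -/
def Recursive {α : Type} [Primcodable α] (A : Set α) : Prop := ComputablePred (· ∈ A)

/-- The initial segment `χ_A(0)…χ_A(n)` of the characteristic sequence of `A ⊆ ℕ`. -/
noncomputable def seg (A : Set ℕ) (n : ℕ) : Str :=
  (List.range (n + 1)).map fun i => @decide (i ∈ A) (Classical.propDecidable _)

/-- Apply `f : ℕ → ℕ` to an extended natural (sending `⊤` to `⊤`). -/
noncomputable def emap (f : ℕ → ℕ) (n : ℕ∞) : ℕ∞ :=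
  if n = ⊤ then ⊤ else (f n.toNat : ℕ∞)

/-- The canonical correspondence `ℕ → {0,1}*` (the binary expansion of `n+1`
with the leading bit removed). -/
def natToStr (n : ℕ) : Str := (Nat.bits (n + 1)).dropLast

/-- The string `χ_A(x_0)…χ_A(x_{n-1})` for the first `n` strings `x_0, x_1, …` in
canonical order, for `A ⊆ {0,1}*`. -/
noncomputable def segS (A : Set Str) (n : ℕ) : Str :=
  (List.range n).map fun i => @decide (natToStr i ∈ A) (Classical.propDecidable _)

/-- The `e`-th r.e. set of strings. -/
def W (e : ℕ) : Set Str :=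
  {x | ((Denumerable.ofNat Nat.Partrec.Code e).eval (Encodable.encode x)).Dom}

/-- The halting set. -/
def Khalt : Set ℕ := {e | ((Denumerable.ofNat Nat.Partrec.Code e).eval e).Dom}

/-- A total function `g` is Turing reducible to `A ⊆ ℕ`: some partial recursive
functional computes `g x` correctly from `x` and long enough initial segments of `χ_A`. -/
def FnTuringRed (g : ℕ → ℕ) (A : Set ℕ) : Prop :=
  ∃ ψ : ℕ × Str →. ℕ, Partrec ψ ∧
    (∀ x n m, m ∈ ψ (x, seg A n) → m = g x) ∧
    (∀ x : ℕ, ∃ n, (ψ (x, seg A n)).Dom)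

/-- Turing reducibility `B ≤_T A` for sets of naturals. -/
def TuringRed (B A : Set ℕ) : Prop :=
  ∃ ψ : ℕ × Str →. Bool, Partrec ψ ∧
    (∀ x n b, b ∈ ψ (x, seg A n) → (b = true ↔ x ∈ B)) ∧
    (∀ x : ℕ, ∃ n, (ψ (x, seg A n)).Dom)

/-- Weak truth-table reducibility of `B ⊆ ℕ` to `A ⊆ {0,1}*`: a Turing reduction
with a total recursive bound `g` on the use of the oracle. -/
def WttRed (B : Set ℕ) (A : Set Str) : Prop :=
  ∃ g : ℕ → ℕ, Computable g ∧
    ∃ ψ : ℕ × Str →. Bool, Partrec ψ ∧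
      ∀ x : ℕ, ∃ b, b ∈ ψ (x, segS A (g x)) ∧ (b = true ↔ x ∈ B)

/-!
Let `u x` be the least `m` with `x < 2 ^ f (m + 1)`, and let `g x` be the stage by which the
enumeration of `A` is correct on `A ↾ u x`. Then `g ≤_T A`, so `g` has an approximation `ḡ`
changing its mind at most `x` times at `x`. Take `x = 2 ^ f n`, so that `n ≤ u x`. From `n` and the
number `j ≤ x` of mind changes of `ḡ` at `x` one finds the stage after the last mind change, hence
`g x`, hence `A ↾ n`. The pair `(n, j)` is coded by `N = 2 ^ (f n + 1) * n + j`, a number of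
`log n + f n + O(1)` bits from which `n` can be recovered as the least `m` with
`N / 2 ^ (f m + 1) = m`.
-/

open Nat.Partrec (Code)

theorem REset.exists_stages {A : Set ℕ} (hA : REset A) :
    ∃ a : ℕ → ℕ → Bool, Primrec₂ a ∧ (∀ i, Monotone fun s => a s i) ∧
      ∀ i, i ∈ A ↔ ∃ s, a s i = true := by
  have hmap : Partrec fun i : ℕ =>
      (Part.assert (i ∈ A) fun _ => Part.some ()).map fun _ => (0 : ℕ) :=
    Partrec.map hA (Computable.const 0).to₂
  obtain ⟨c, hc⟩ := Code.exists_code.1 (Partrec.nat_iff.1 hmap)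
  refine ⟨fun s i => (c.evaln s i).isSome, ?_, fun i s s' hss' => ?_, fun i => ?_⟩
  · exact Primrec.option_isSome.comp
      (Code.primrec_evaln.comp ((Primrec.fst.pair (Primrec.const c)).pair Primrec.snd))
  · simp only [Bool.le_iff_imp, Option.isSome_iff_exists]
    exact fun ⟨v, hv⟩ => ⟨v, Code.evaln_mono hss' hv⟩
  · have hdom : i ∈ A ↔ (c.eval i).Dom := by
      simpa [hc] using ⟨fun h => ⟨h, trivial⟩, fun h => h.1⟩
    simp only [hdom, Part.dom_iff_mem, Code.evaln_complete, Option.isSome_iff_exists]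
    exact exists_comm

theorem exists_stage_eq_seg {a : ℕ → ℕ → Bool} {A : Set ℕ} (hmono : ∀ i, Monotone fun s => a s i)
    (hA : ∀ i, i ∈ A ↔ ∃ s, a s i = true) (n : ℕ) :
    ∃ s, (List.range (n + 1)).map (a s) = seg A n := by
  classical
  have hev : ∀ i, ∀ᶠ s in Filter.atTop, a s i = decide (i ∈ A) := by
    intro i
    by_cases hi : i ∈ A
    · obtain ⟨s₀, hs₀⟩ := (hA i).1 hi
      filter_upwards [Filter.eventually_ge_atTop s₀] with s hs
      simpa [hi] using Bool.le_iff_imp.1 (hmono i hs) hs₀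
    · refine Filter.Eventually.of_forall fun s => ?_
      simpa [hi] using mt (fun h => (hA i).2 ⟨s, h⟩) hi
  obtain ⟨s, hs⟩ :=
    ((Filter.eventually_all_finset (Finset.range (n + 1))).2 fun i _ => hev i).exists
  exact ⟨s, List.map_congr_left fun i hi => by simpa using hs i (by simpa using hi)⟩

theorem take_map_range {α : Type*} (p : ℕ → α) {m n : ℕ} (h : m ≤ n) :
    ((List.range n).map p).take m = (List.range m).map p := by
  rw [← List.map_take, List.take_range, min_eq_left h]

theorem seg_take {A : Set ℕ} {m n : ℕ} (h : m ≤ n) : (seg A n).take (m + 1) = seg A m :=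
  take_map_range _ (Nat.succ_le_succ h)

theorem stage_eq_seg_of_le {a : ℕ → ℕ → Bool} {A : Set ℕ} {s m n : ℕ}
    (h : (List.range (m + 1)).map (a s) = seg A m) (hn : n ≤ m) :
    (List.range (n + 1)).map (a s) = seg A n := by
  rw [← seg_take hn, ← h, take_map_range _ (Nat.succ_le_succ hn)]

theorem Nat.find_mem_rfind {p : ℕ → Prop} [DecidablePred p] (h : ∃ n, p n) :
    Nat.find h ∈ Nat.rfind fun n => Part.some (decide (p n)) :=
  Nat.mem_rfind.2 ⟨by simpa using Nat.find_spec h, fun hm => by simpa using Nat.find_min h hm⟩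

theorem FnTuringRed.of_use {g : ℕ → ℕ} {A : Set ℕ} {u : ℕ → ℕ} (hu : Computable u)
    {F : ℕ × Str →. ℕ} (hF : Partrec F) (hg : ∀ x, g x ∈ F (x, seg A (u x))) :
    FnTuringRed g A := by
  refine ⟨fun q => cond (decide (u q.1 < q.2.length)) (F (q.1, q.2.take (u q.1 + 1))) Part.none,
    ?_, fun x n m hm => ?_, fun x => ⟨u x, ?_⟩⟩
  · refine Partrec.cond ?_ (hF.comp (Computable.fst.pair ?_)) Partrec.none
    · exact (Primrec.nat_lt.decide.to_comp).comp (hu.comp Computable.fst)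
        (Computable.list_length.comp Computable.snd)
    · exact Primrec.list_take.to_comp.comp (Computable.succ.comp (hu.comp Computable.fst))
        Computable.snd
  · by_cases h : u x < (seg A n).length
    · have hle : u x ≤ n := by simpa [seg] using h
      simp only [h, decide_true, cond_true, seg_take hle] at hm
      exact Part.mem_unique hm (hg x)
    · simp [h] at hm
  · have hlt : u x < (seg A (u x)).length := by simp [seg]
    simp only [hlt, decide_true, cond_true, seg_take le_rfl]
    exact Part.dom_iff_mem.2 ⟨_, hg x⟩

theorem fnTuringRed_find_stage {a : ℕ → ℕ → Bool} (ha : Primrec₂ a) {A : Set ℕ} {u : ℕ → ℕ}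
    (hu : Computable u) (h : ∀ x, ∃ s, (List.range (u x + 1)).map (a s) = seg A (u x)) :
    FnTuringRed (fun x => Nat.find (h x)) A := by
  refine FnTuringRed.of_use hu (F := fun q =>
    Nat.rfind fun s => Part.some (decide ((List.range (u q.1 + 1)).map (a s) = q.2))) ?_
    fun x => Nat.find_mem_rfind (h x)
  refine Partrec.rfind (Computable₂.partrec₂ (Computable₂.comp (Primrec.eq.decide.to_comp) ?_
    (Computable.snd.comp Computable.fst)))
  have hseg : Primrec₂ fun (n s : ℕ) => (List.range (n + 1)).map (a s) :=
    Primrec.list_map (Primrec.list_range.comp (Primrec.succ.comp Primrec.fst))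
      (ha.comp (Primrec.snd.comp Primrec.fst) Primrec.snd)
  exact hseg.to_comp.comp (hu.comp (Computable.fst.comp Computable.fst))
    Computable.snd

def changeCount (v : ℕ → ℕ) : ℕ → ℕ
  | 0 => 0
  | t + 1 => changeCount v t + if v t = v (t + 1) then 0 else 1

theorem changeCount_eq_card (v : ℕ → ℕ) (t : ℕ) :
    changeCount v t = ((Finset.range t).filter fun s => v s ≠ v (s + 1)).card := by
  induction t with
  | zero => rfl
  | succ t ih =>
    rw [Finset.range_add_one, Finset.filter_insert, changeCount, ih]
    by_cases h : v t = v (t + 1)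
    · simp [h]
    · simp [h, Finset.card_insert_of_notMem]

theorem exists_changeCount_eq_ncard {v : ℕ → ℕ} (hfin : {s | v s ≠ v (s + 1)}.Finite) :
    ∃ t, changeCount v t = {s | v s ≠ v (s + 1)}.ncard := by
  obtain ⟨t, ht⟩ := hfin.bddAbove
  refine ⟨t + 1, ?_⟩
  rw [changeCount_eq_card, Set.ncard_eq_toFinset_card _ hfin]
  congr 1
  ext s
  simpa using fun h => Nat.lt_succ_of_le (ht h)

theorem eq_of_changeCount_eq_ncard {v : ℕ → ℕ} (hfin : {s | v s ≠ v (s + 1)}.Finite) {t : ℕ}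
    (ht : changeCount v t = {s | v s ≠ v (s + 1)}.ncard) {s : ℕ} (hs : t ≤ s) : v s = v t := by
  have hsub : (Finset.range t).filter (fun s => v s ≠ v (s + 1)) ⊆ hfin.toFinset := by
    intro s; simp
  have heq := Finset.eq_of_subset_of_card_le hsub (by
    rw [← changeCount_eq_card, ht, Set.ncard_eq_toFinset_card _ hfin])
  have hconst : ∀ s, t ≤ s → v (s + 1) = v s := fun s hs => by
    by_contra hne
    have : s ∈ hfin.toFinset := by simpa using Ne.symm hne
    rw [← heq] at this
    simp at this
    omega
  induction s, hs using Nat.le_induction with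
  | base => rfl
  | succ s hs ih => rw [hconst s hs, ih]

theorem computable_changeCount {G : ℕ → ℕ → ℕ} (hG : Computable₂ G) :
    Computable₂ fun x t => changeCount (G x) t := by
  have hstep : Computable₂ fun (q : ℕ × ℕ) (r : ℕ × ℕ) =>
      r.2 + cond (decide (G q.1 r.1 = G q.1 (r.1 + 1))) 0 1 := by
    refine Computable₂.mk (Primrec.nat_add.to_comp.comp (Computable.snd.comp Computable.snd)
      (Computable.cond ?_ (Computable.const 0) (Computable.const 1)))
    exact Primrec.eq.decide.to_comp.comp
      (hG.comp (Computable.fst.comp Computable.fst) (Computable.fst.comp Computable.snd))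
      (hG.comp (Computable.fst.comp Computable.fst)
        (Computable.succ.comp (Computable.fst.comp Computable.snd)))
  refine (Computable.nat_rec (f := fun q : ℕ × ℕ => q.2) (g := fun _ => 0) Computable.snd
    (Computable.const 0) hstep).to₂.of_eq fun q => ?_
  induction q.2 with
  | zero => rfl
  | succ t ih => simp only [changeCount, ← ih]; split_ifs <;> simp_all

def ofBits (p : Str) : ℕ := p.foldr Nat.bit 0

theorem ofBits_bits (N : ℕ) : ofBits N.bits = N := by
  induction N using Nat.binaryRec' with
  | zero => rfl
  | bit b n hn ih =>
    rw [Nat.bits_append_bit n b hn]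
    simpa [ofBits] using congrArg (Nat.bit b) ih

theorem primrec_ofBits : Primrec ofBits := by
  have hbit : Primrec₂ Nat.bit := by
    have hdouble : Primrec fun q : Bool × ℕ => 2 * q.2 :=
      Primrec.nat_mul.comp (Primrec.const 2) Primrec.snd
    exact (Primrec.cond Primrec.fst (Primrec.succ.comp hdouble) hdouble).to₂.of_eq
      fun b n => by cases b <;> rfl
  exact Primrec.list_foldr Primrec.id (Primrec.const 0)
    (hbit.comp (Primrec.fst.comp Primrec.snd) (Primrec.snd.comp Primrec.snd)).to₂

theorem length_bits_two_pow_mul_add_le {k n j : ℕ} (hj : j < 2 ^ k) :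
    (Nat.bits (2 ^ k * n + j)).length ≤ Nat.log 2 n + k + 1 := by
  rw [Nat.size_eq_bits_len, Nat.size_le]
  calc 2 ^ k * n + j < 2 ^ k * (n + 1) := by rw [Nat.mul_succ]; omega
    _ ≤ 2 ^ k * 2 ^ (Nat.log 2 n + 1) :=
      Nat.mul_le_mul_left _ (Nat.lt_pow_succ_log_self one_lt_two n)
    _ = 2 ^ (Nat.log 2 n + k + 1) := by rw [← pow_add]; ring_nf

theorem primrec_two_pow : Primrec fun k : ℕ => 2 ^ k :=
  (Primrec₂.unpaired'.1 Nat.Primrec.pow).comp (Primrec.const 2) Primrec.id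

def unpackLength (f : ℕ → ℕ) (N : ℕ) : Part ℕ :=
  Nat.rfind fun m => Part.some (decide (N / 2 ^ (f m + 1) = m))

theorem mem_unpackLength {f : ℕ → ℕ} (hf : Monotone f) {n j : ℕ} (hj : j < 2 ^ (f n + 1)) :
    n ∈ unpackLength f (2 ^ (f n + 1) * n + j) := by
  have hdiv : ∀ k, f k ≤ f n → (2 ^ (f n + 1) * n + j) / 2 ^ (f k + 1) ≥ n := by
    intro k hk
    calc n = (2 ^ (f n + 1) * n + j) / 2 ^ (f n + 1) := by
          rw [Nat.mul_add_div (Nat.two_pow_pos _), Nat.div_eq_of_lt hj, add_zero]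
      _ ≤ _ := Nat.div_le_div_left (Nat.pow_le_pow_right two_pos (by omega)) (Nat.two_pow_pos _)
  refine Nat.mem_rfind.2 ⟨?_, fun {m} hm => ?_⟩
  · simp [Nat.mul_add_div (Nat.two_pow_pos _), Nat.div_eq_of_lt hj]
  · have := hdiv m (hf hm.le)
    simp only [Part.mem_some_iff, Bool.false_eq, decide_eq_false_iff_not]
    omega

theorem partrec_unpackLength {f : ℕ → ℕ} (hf : Computable f) : Partrec (unpackLength f) := by
  refine Partrec.rfind (Computable₂.partrec₂ (Computable₂.mk ?_))
  exact Primrec.eq.decide.to_comp.comp (Primrec.nat_div.to_comp.comp Computable.fst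
    (primrec_two_pow.to_comp.comp (Computable.succ.comp (hf.comp Computable.snd)))) Computable.snd

def segDecoder (a : ℕ → ℕ → Bool) (f : ℕ → ℕ) (G : ℕ → ℕ → ℕ) (p : Str) : Part (Option Str) :=
  (unpackLength f (ofBits p)).bind fun n =>
    (Nat.rfind fun t => Part.some
      (decide (changeCount (G (2 ^ f n)) t = ofBits p % 2 ^ (f n + 1)))).map
      fun t => some ((List.range (n + 1)).map (a (G (2 ^ f n) t)))

theorem partrec_segDecoder {a : ℕ → ℕ → Bool} (ha : Primrec₂ a) {f : ℕ → ℕ} (hf : Computable f)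
    {G : ℕ → ℕ → ℕ} (hG : Computable₂ G) : Partrec (segDecoder a f G) := by
  have hN : Computable fun q : Str × ℕ => ofBits q.1 := primrec_ofBits.to_comp.comp Computable.fst
  have hx : Computable fun q : Str × ℕ => 2 ^ f q.2 :=
    primrec_two_pow.to_comp.comp (hf.comp Computable.snd)
  have hsearch : Partrec₂ fun (q : Str × ℕ) (t : ℕ) => Part.some
      (decide (changeCount (G (2 ^ f q.2)) t = ofBits q.1 % 2 ^ (f q.2 + 1))) :=
    Computable₂.partrec₂ <| Computable₂.mk <| Primrec.eq.decide.to_comp.comp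
      ((computable_changeCount hG).comp (hx.comp Computable.fst) Computable.snd)
      (Primrec.nat_mod.to_comp.comp (hN.comp Computable.fst)
        (primrec_two_pow.to_comp.comp (Computable.succ.comp (hf.comp
          (Computable.snd.comp Computable.fst)))))
  have hout : Computable₂ fun (q : Str × ℕ) (t : ℕ) =>
      (some ((List.range (q.2 + 1)).map (a (G (2 ^ f q.2) t))) : Option Str) := by
    have hseg : Primrec₂ fun (n s : ℕ) => (List.range (n + 1)).map (a s) :=
      Primrec.list_map (Primrec.list_range.comp (Primrec.succ.comp Primrec.fst))
        (ha.comp (Primrec.snd.comp Primrec.fst) Primrec.snd)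
    exact Computable₂.mk <| Computable.option_some.comp <| hseg.to_comp.comp
      (Computable.snd.comp Computable.fst) (hG.comp (hx.comp Computable.fst) Computable.snd)
  exact ((partrec_unpackLength hf).comp primrec_ofBits.to_comp).bind
    ((Partrec.rfind hsearch).map hout)

theorem Optimal.exists_KC_le {U : Interp} (hU : Optimal U) {D : Str →. Option Str}
    (hD : Partrec D) : ∃ c : ℕ, ∀ p x, some x ∈ D p → KC U x ≤ p.length + c := by
  obtain ⟨c, hc, -, -⟩ := hU.2 (fun p _ => D p) (hD.comp Computable.fst)
  refine ⟨c, fun p x hx => (hc x).trans ?_⟩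
  gcongr
  exact sInf_le ⟨p, hx, rfl⟩

theorem seg_mem_segDecoder {a : ℕ → ℕ → Bool} {f : ℕ → ℕ} (hf : Monotone f) {G : ℕ → ℕ → ℕ}
    {A : Set ℕ} {n s : ℕ} (hfin : {t | G (2 ^ f n) t ≠ G (2 ^ f n) (t + 1)}.Finite)
    (hj : {t | G (2 ^ f n) t ≠ G (2 ^ f n) (t + 1)}.ncard < 2 ^ (f n + 1))
    (hlim : ∃ t₀, ∀ t ≥ t₀, G (2 ^ f n) t = s)
    (hs : (List.range (n + 1)).map (a s) = seg A n) :
    some (seg A n) ∈ segDecoder a f G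
      (Nat.bits (2 ^ (f n + 1) * n + {t | G (2 ^ f n) t ≠ G (2 ^ f n) (t + 1)}.ncard)) := by
  set j := {t | G (2 ^ f n) t ≠ G (2 ^ f n) (t + 1)}.ncard
  obtain ⟨t, ht⟩ := exists_changeCount_eq_ncard hfin
  obtain ⟨t₁, ht₁, -⟩ := Nat.rfind_min'
    (p := fun t => decide (changeCount (G (2 ^ f n)) t = j)) (by simpa using ht)
  have hcount : changeCount (G (2 ^ f n)) t₁ = j := by simpa using Nat.rfind_spec ht₁
  obtain ⟨t₀, ht₀⟩ := hlim
  have hval : G (2 ^ f n) t₁ = s := by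
    rw [← eq_of_changeCount_eq_ncard hfin hcount (le_max_left t₁ t₀), ht₀ _ (le_max_right _ _)]
  simp only [segDecoder, ofBits_bits, Part.mem_bind_iff, Part.mem_map_iff]
  refine ⟨n, mem_unpackLength hf hj, t₁, ?_, by rw [hval, hs]⟩
  rwa [Nat.mul_add_mod, Nat.mod_eq_of_lt hj]

theorem exists_lt_two_pow_comp_succ {f : ℕ → ℕ} (hmono : Monotone f) (hunb : ∀ m, ∃ n, m ≤ f n)
    (x : ℕ) : ∃ m, x < 2 ^ f (m + 1) := by
  obtain ⟨m, hm⟩ := hunb x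
  exact ⟨m, x.lt_two_pow_self.trans_le
    (Nat.pow_le_pow_right two_pos (hm.trans (hmono m.le_succ)))⟩

theorem stmt8 (U : Interp) (hU : Optimal U) (A : Set ℕ) (hA : REset A)
    (happ : ∀ g : ℕ → ℕ, FnTuringRed g A →
      ∃ gbar : ℕ → ℕ → ℕ, Computable₂ gbar ∧
        (∀ x, ∃ s₀, ∀ s ≥ s₀, gbar x s = g x) ∧
        (∀ x, {s | gbar x s ≠ gbar x (s + 1)}.Finite ∧
          {s | gbar x s ≠ gbar x (s + 1)}.ncard ≤ x))
    (f : ℕ → ℕ) (hf : Computable f) (hmono : Monotone f) (hunb : ∀ m, ∃ n, m ≤ f n) :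
    ∃ c : ℕ, ∀ n : ℕ, KC U (seg A n) ≤ ((Nat.log 2 n + f n + c : ℕ) : ℕ∞) := by
  obtain ⟨a, ha, hamono, hAa⟩ := hA.exists_stages
  have hscale := exists_lt_two_pow_comp_succ hmono hunb
  have hu : Computable fun x => Nat.find (hscale x) := by
    refine Computable.find (Computable.computablePred ?_) hscale
    exact Primrec.nat_lt.decide.to_comp.comp Computable.fst
      (primrec_two_pow.to_comp.comp (hf.comp (Computable.succ.comp Computable.snd)))
  have hstage := fun x => exists_stage_eq_seg hamono hAa (Nat.find (hscale x))
  obtain ⟨G, hG, hlim, hchanges⟩ := happ _ (fnTuringRed_find_stage ha hu hstage)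
  obtain ⟨c, hc⟩ := hU.exists_KC_le (partrec_segDecoder ha hf hG)
  refine ⟨c + 2, fun n => ?_⟩
  obtain ⟨hfin, hcard⟩ := hchanges (2 ^ f n)
  have hn : n ≤ Nat.find (hscale (2 ^ f n)) := (Nat.le_find_iff _ _).2 fun m hm =>
    not_lt.2 (Nat.pow_le_pow_right two_pos (hmono hm))
  have hs := stage_eq_seg_of_le (Nat.find_spec (hstage (2 ^ f n))) hn
  have hj : {t | G (2 ^ f n) t ≠ G (2 ^ f n) (t + 1)}.ncard < 2 ^ (f n + 1) :=
    hcard.trans_lt (Nat.pow_lt_pow_right one_lt_two (f n).lt_succ_self)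
  refine (hc _ _ (seg_mem_segDecoder hmono hfin hj (hlim _) hs)).trans ?_
  have hlen := length_bits_two_pow_mul_add_le (n := n) hj
  exact_mod_cast (Nat.add_le_add_right hlen c).trans (by omega)
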